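/- arXiv:1905.06813 — 3 statements merged into one kernel-verified Lean document; each statement's English description precedes it below -/
import Mathlib

section
/- Let n be a positive integer, λ = (p_1,…,p_k) a partition of n, and let f : {1,…,n} → {1,…,k} be the map with f(s) = i exactly when p_1+⋯+p_{i−1} < s ≤ p_1+⋯+p_i. Let G = {φ ∈ S_n : f∘φ = f}. Work over the polynomial ring R_k = ℤ[q_{a,b} : a,b ∈ {1,…,k}], and let M be the free R_k-module with basis (e_σ)_{σ ∈ S_n}. Define the R_k-linear map γ_f : M → M by γ_f(e_τ) = Σ_{σ ∈ S_n} v_f(τ,σ) e_σ, where v_f(τ,σ) := ∏ q_{f(τ(i)),f(τ(j))}, the product over pairs (i,j) with 1 ≤ i < j ≤ n and σ⁻¹(τ(i)) > σ⁻¹(τ(j)). Let N ⊆ M be the R_k-submodule spanned by the elements Σ_{φ ∈ G} e_{φ∘σ}, one for each σ ∈ S_n. Then γ_f(N) ⊆ N; more precisely, for every τ ∈ S_n, γ_f(Σ_{φ∈G} e_{φτ}) = Σ_{cosets Gσ} c(τ,σ) · (Σ_{φ∈G} e_{φσ}) where c(τ,σ) = Σ_{ψ∈G} v_f(ψτ,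 σ). -/
/-- The polynomial ring `R_k = ℤ[q_{a,b} : a,b ∈ {1,…,k}]`. -/
abbrev Rk (k : ℕ) : Type := MvPolynomial (Fin k × Fin k) ℤ

/-- `v_f(τ,σ)`: the product of `q_{f(τ(i)),f(τ(j))}` over the pairs `i < j`
with `σ⁻¹(τ(i)) > σ⁻¹(τ(j))`. -/
noncomputable def vf {n k : ℕ} (f : Fin n → Fin k) (τ σ : Equiv.Perm (Fin n)) :
    Rk k :=
  ∏ p ∈ Finset.univ.filter
      (fun p : Fin n × Fin n => p.1 < p.2 ∧ σ⁻¹ (τ p.2) < σ⁻¹ (τ p.1)),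
    MvPolynomial.X (f (τ p.1), f (τ p.2))

/-- The Young subgroup `G = {φ ∈ S_n : f ∘ φ = f}` (as a finset). -/
def youngG {n k : ℕ} (f : Fin n → Fin k) : Finset (Equiv.Perm (Fin n)) :=
  Finset.univ.filter fun φ => f ∘ ⇑φ = f

/-- The basis vector `e_σ` of the free module `M = R_k^{S_n}`. -/
noncomputable def eBasis {n k : ℕ} (σ : Equiv.Perm (Fin n)) :
    Equiv.Perm (Fin n) → Rk k :=
  fun ρ => if ρ = σ then 1 else 0

/-- The linear operator `γ_f` with `γ_f(e_τ) = Σ_σ v_f(τ,σ) e_σ`. -/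
noncomputable def gammaF {n k : ℕ} (f : Fin n → Fin k)
    (x : Equiv.Perm (Fin n) → Rk k) : Equiv.Perm (Fin n) → Rk k :=
  fun σ => ∑ τ : Equiv.Perm (Fin n), vf f τ σ * x τ

/-- The submodule `N` spanned by the coset sums `Σ_{φ∈G} e_{φσ}`, `σ ∈ S_n`. -/
noncomputable def cosetSubmodule {n k : ℕ} (f : Fin n → Fin k) :
    Submodule (Rk k) (Equiv.Perm (Fin n) → Rk k) :=
  Submodule.span (Rk k)
    {g | ∃ σ : Equiv.Perm (Fin n), g = ∑ φ ∈ youngG f, eBasis (k := k) (φ * σ)}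

/-!
For `φ ∈ G` we have `v_f(τ, φσ) = v_f(φ⁻¹τ, σ)`, since `v_f(τ, σ)` depends on `τ` only through
`f ∘ τ` and the relative order of `σ⁻¹τ`. Reindexing the sum over `G`, the coefficient
`Σ_{ψ ∈ G} v_f(ψτ, ρ)` of `e_ρ` in `γ_f(Σ_{φ ∈ G} e_{φτ})` is therefore constant on the right coset
`Gρ`, and a vector constant on right cosets is the combination of the coset sums over a
transversal with its values there as coefficients. As `γ_f` is linear, it preserves their span.
-/

open Equiv Finset

section

variable {n k : ℕ} {f : Fin n → Fin k}

lemma mem_youngG {φ : Perm (Fin n)} : φ ∈ youngG f ↔ f ∘ ⇑φ = f := by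
  simp [youngG]

lemma apply_eq_of_mem_youngG {φ : Perm (Fin n)} (hφ : φ ∈ youngG f) (x : Fin n) :
    f (φ x) = f x :=
  congrFun (mem_youngG.mp hφ) x

lemma mul_mem_youngG {φ ψ : Perm (Fin n)} (hφ : φ ∈ youngG f) (hψ : ψ ∈ youngG f) :
    φ * ψ ∈ youngG f :=
  mem_youngG.mpr <| funext fun x => by
    simp [apply_eq_of_mem_youngG hφ, apply_eq_of_mem_youngG hψ]

lemma inv_mem_youngG {φ : Perm (Fin n)} (hφ : φ ∈ youngG f) : φ⁻¹ ∈ youngG f :=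
  mem_youngG.mpr <| funext fun x => by
    simpa using (apply_eq_of_mem_youngG hφ (φ⁻¹ x)).symm

lemma sum_youngG_mul_left {M : Type*} [AddCommMonoid M] {φ : Perm (Fin n)}
    (hφ : φ ∈ youngG f) (g : Perm (Fin n) → M) :
    ∑ ψ ∈ youngG f, g (φ * ψ) = ∑ ψ ∈ youngG f, g ψ :=
  sum_nbij' (φ * ·) (φ⁻¹ * ·) (fun _ hψ => mul_mem_youngG hφ hψ)
    (fun _ hψ => mul_mem_youngG (inv_mem_youngG hφ) hψ)
    (fun _ _ => inv_mul_cancel_left φ _) (fun _ _ => mul_inv_cancel_left φ _)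
    (fun _ _ => rfl)

lemma vf_mul_left_of_mem_youngG {φ : Perm (Fin n)} (hφ : φ ∈ youngG f)
    (τ σ : Perm (Fin n)) : vf f τ (φ * σ) = vf f (φ⁻¹ * τ) σ := by
  have hf : ∀ x, f (φ⁻¹ x) = f x := apply_eq_of_mem_youngG (inv_mem_youngG hφ)
  unfold vf
  refine prod_congr (filter_congr fun _ _ => by simp [mul_inv_rev]) fun _ _ => ?_
  simp only [Perm.mul_apply, hf]

lemma sum_vf_mul_left_of_mem_youngG {φ : Perm (Fin n)} (hφ : φ ∈ youngG f)
    (τ ρ : Perm (Fin n)) :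
    ∑ ψ ∈ youngG f, vf f (ψ * τ) (φ * ρ) = ∑ ψ ∈ youngG f, vf f (ψ * τ) ρ := by
  simp_rw [vf_mul_left_of_mem_youngG hφ, ← mul_assoc]
  exact sum_youngG_mul_left (inv_mem_youngG hφ) fun ψ => vf f (ψ * τ) ρ

lemma sum_eBasis_mul_right_apply (s : Finset (Perm (Fin n))) (t ρ : Perm (Fin n)) :
    (∑ φ ∈ s, eBasis (k := k) (φ * t)) ρ = if ρ * t⁻¹ ∈ s then 1 else 0 := by
  simp only [Finset.sum_apply, eBasis, ← mul_inv_eq_iff_eq_mul, sum_ite_eq]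

noncomputable def gammaFLinearMap (f : Fin n → Fin k) :
    (Perm (Fin n) → Rk k) →ₗ[Rk k] (Perm (Fin n) → Rk k) :=
  (Matrix.of fun σ τ => vf f τ σ).mulVecLin

lemma coe_gammaFLinearMap : ⇑(gammaFLinearMap f) = gammaF f := rfl

lemma gammaF_eBasis (τ : Perm (Fin n)) : gammaF f (eBasis τ) = vf f τ := by
  funext σ
  simp [gammaF, eBasis]

lemma gammaF_sum_eBasis {ι : Type*} (s : Finset ι) (g : ι → Perm (Fin n)) :
    gammaF f (∑ i ∈ s, eBasis (g i)) = fun ρ => ∑ i ∈ s, vf f (g i) ρ := by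
  rw [← coe_gammaFLinearMap, map_sum, coe_gammaFLinearMap]
  simp_rw [gammaF_eBasis]
  exact sum_fn s _

lemma sum_smul_sum_eBasis_eq_of_forall_mul_left {T : Finset (Perm (Fin n))}
    (hT : ∀ σ : Perm (Fin n), ∃! t, t ∈ T ∧ σ * t⁻¹ ∈ youngG f) (c : Perm (Fin n) → Rk k)
    (hc : ∀ φ ∈ youngG f, ∀ ρ, c (φ * ρ) = c ρ) :
    ∑ t ∈ T, c t • ∑ φ ∈ youngG f, eBasis (k := k) (φ * t) = c := by
  funext ρ
  obtain ⟨t₀, ⟨ht₀, hρt₀⟩, huniq⟩ := hT ρ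
  rw [Finset.sum_apply]
  simp only [Pi.smul_apply, sum_eBasis_mul_right_apply, smul_eq_mul, mul_ite, mul_one, mul_zero]
  rw [sum_eq_single_of_mem t₀ ht₀ fun t ht hne => if_neg fun h => hne (huniq t ⟨ht, h⟩),
    if_pos hρt₀, ← hc _ hρt₀, inv_mul_cancel_right]

end

theorem gammaF_maps_cosetSubmodule_general (n k : ℕ)
    (f : Fin n → Fin k)
    (T : Finset (Equiv.Perm (Fin n)))
    (hT : ∀ σ : Equiv.Perm (Fin n), ∃! t, t ∈ T ∧ σ * t⁻¹ ∈ youngG f) :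
    (∀ x ∈ cosetSubmodule f, gammaF f x ∈ cosetSubmodule f) ∧
    ∀ τ : Equiv.Perm (Fin n),
      gammaF f (∑ φ ∈ youngG f, eBasis (k := k) (φ * τ)) =
        ∑ t ∈ T, (∑ ψ ∈ youngG f, vf f (ψ * τ) t) •
          (∑ φ ∈ youngG f, eBasis (k := k) (φ * t)) := by
  have expand : ∀ τ : Perm (Fin n),
      gammaF f (∑ φ ∈ youngG f, eBasis (k := k) (φ * τ)) =
        ∑ t ∈ T, (∑ ψ ∈ youngG f, vf f (ψ * τ) t) •
          (∑ φ ∈ youngG f, eBasis (k := k) (φ * t)) := fun τ => by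
    rw [gammaF_sum_eBasis, sum_smul_sum_eBasis_eq_of_forall_mul_left hT _
      fun φ hφ ρ => sum_vf_mul_left_of_mem_youngG hφ τ ρ]
  refine ⟨fun x hx => ?_, expand⟩
  have hle : cosetSubmodule f ≤ (cosetSubmodule f).comap (gammaFLinearMap f) := by
    refine Submodule.span_le.mpr ?_
    rintro _ ⟨τ, rfl⟩
    rw [SetLike.mem_coe, Submodule.mem_comap, coe_gammaFLinearMap, expand]
    exact Submodule.sum_mem _ fun t _ => Submodule.smul_mem _ _ (Submodule.subset_span ⟨t, rfl⟩)
  exact hle hx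

theorem gammaF_maps_cosetSubmodule (n k : ℕ) (hn : 0 < n)
    (p : Fin k → ℕ) (hpos : ∀ i, 0 < p i)
    (hmono : ∀ i j : Fin k, i ≤ j → p j ≤ p i) (hsum : ∑ i, p i = n)
    (f : Fin n → Fin k)
    (hf : ∀ (s : Fin n) (i : Fin k),
      f s = i ↔ ∑ j ∈ Finset.Iio i, p j ≤ (s : ℕ) ∧
        (s : ℕ) < ∑ j ∈ Finset.Iic i, p j)
    (T : Finset (Equiv.Perm (Fin n)))
    (hT : ∀ σ : Equiv.Perm (Fin n), ∃! t, t ∈ T ∧ σ * t⁻¹ ∈ youngG f) :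
    (∀ x ∈ cosetSubmodule f, gammaF f x ∈ cosetSubmodule f) ∧
    ∀ τ : Equiv.Perm (Fin n),
      gammaF f (∑ φ ∈ youngG f, eBasis (k := k) (φ * τ)) =
        ∑ t ∈ T, (∑ ψ ∈ youngG f, vf f (ψ * τ) t) •
          (∑ φ ∈ youngG f, eBasis (k := k) (φ * t)) :=
  gammaF_maps_cosetSubmodule_general n k f T hT
end

section
/- In the multiparametric quon algebra A, for every i ∈ ℕ⁺ and every finite sequence (j_1,…,j_t) of positive integers: a_i · a†_{j_1}⋯a†_{j_t} = (∏_{u=1}^{t} q_{i,j_u}) · a†_{j_1}⋯a†_{j_t} · a_i + Σ_{u ∈ {1,…,t}, j_u = i} (∏_{v=1}^{u−1} q_{i,j_v}) · a†_{j_1}⋯\widehat{a†_{j_u}}⋯a†_{j_t}, where the hat over the u-th factor indicates that this factor is omitted. -/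
/-!
Moving `a_i` to the right through `a†_{j_1}⋯a†_{j_t}` one factor at a time, each factor
`a†_{j_u}` contributes a scalar `q_{i,j_u}`, and the constant term `δ_{i,j_u}` of the relation
splits off a word in which `a_i` has annihilated exactly that factor. This is a twisted Leibniz
rule, valid for any element of an algebra that satisfies relations of this shape.
-/

/-- The coefficient ring `R = ℂ[q_{i,j} : i,j ∈ ℕ⁺]`. -/
abbrev QR : Type := MvPolynomial (ℕ+ × ℕ+) ℂ

/-- The quon relations `a_i a_j† = q_{i,j} a_j† a_i + δ_{i,j}` on the free
`R`-algebra on the symbols `a_i` (`Sum.inl i`) and `a_i†` (`Sum.inr i`). -/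
inductive QuonRel : FreeAlgebra QR (ℕ+ ⊕ ℕ+) → FreeAlgebra QR (ℕ+ ⊕ ℕ+) → Prop
  | rel (i j : ℕ+) : QuonRel
      (FreeAlgebra.ι QR (Sum.inl i) * FreeAlgebra.ι QR (Sum.inr j))
      ((MvPolynomial.X (i, j) : QR) •
          (FreeAlgebra.ι QR (Sum.inr j) * FreeAlgebra.ι QR (Sum.inl i))
        + if i = j then 1 else 0)

/-- The multiparametric quon algebra `A`. -/
abbrev QuonAlg : Type := RingQuot QuonRel

/-- The annihilation operator `a_i`. -/
noncomputable def ann (i : ℕ+) : QuonAlg :=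
  RingQuot.mkAlgHom QR QuonRel (FreeAlgebra.ι QR (Sum.inl i))

/-- The creation operator `a_i†`. -/
noncomputable def cre (i : ℕ+) : QuonAlg :=
  RingQuot.mkAlgHom QR QuonRel (FreeAlgebra.ι QR (Sum.inr i))

open Finset

theorem Fin.prod_filter_lt_succ {M : Type*} [CommMonoid M] {t : ℕ} (f : Fin (t + 1) → M)
    (u : Fin t) :
    ∏ v ∈ univ.filter (· < u.succ), f v = f 0 * ∏ v ∈ univ.filter (· < u), f v.succ := by
  simp only [prod_filter, Fin.prod_univ_succ, Fin.succ_pos, if_true, Fin.succ_lt_succ_iff]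

variable {R A : Type*} [CommSemiring R] [Semiring A] [Algebra R A]

theorem mul_prod_ofFn_of_mul_eq_smul_add {t : ℕ} (a : A) (c : Fin t → A) (q δ : Fin t → R)
    (h : ∀ u, a * c u = q u • (c u * a) + δ u • 1) :
    a * (List.ofFn c).prod =
      (∏ u, q u) • ((List.ofFn c).prod * a)
        + ∑ u, ((∏ v ∈ univ.filter (· < u), q v) * δ u) •
            ((List.ofFn c).eraseIdx u).prod := by
  induction t with
  | zero => simp
  | succ t ih =>
    have tail := ih (fun u => c u.succ) (fun u => q u.succ) (fun u => δ u.succ) fun u => h u.succ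
    calc a * (List.ofFn c).prod
        = q 0 • (c 0 * (a * (List.ofFn fun u => c u.succ).prod))
            + δ 0 • (List.ofFn fun u => c u.succ).prod := by
          rw [List.ofFn_succ, List.prod_cons, ← mul_assoc, h, add_mul, smul_mul_assoc, mul_assoc,
            smul_one_mul]
      _ = _ := by
          rw [tail, Fin.prod_univ_succ, Fin.sum_univ_succ, List.ofFn_succ]
          simp only [Fin.val_zero, Fin.val_succ, List.eraseIdx_cons_zero, List.eraseIdx_cons_succ,
            List.prod_cons, Fin.not_lt_zero, filter_false, prod_empty, one_mul,
            Fin.prod_filter_lt_succ, mul_add, smul_add, mul_sum, smul_sum, mul_smul_comm, smul_smul,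
            mul_assoc]
          abel

theorem ann_mul_cre (i j : ℕ+) :
    ann i * cre j = (MvPolynomial.X (i, j) : QR) • (cre j * ann i) + if i = j then 1 else 0 := by
  simpa [ann, cre, apply_ite] using RingQuot.mkAlgHom_rel QR (QuonRel.rel i j)

/-- The commutation formula for moving `a_i` past a product of creation
operators `a†_{j_1}⋯a†_{j_t}`. -/
theorem ann_mul_cre_prod (i : ℕ+) (t : ℕ) (j : Fin t → ℕ+) :
    ann i * (List.ofFn fun u => cre (j u)).prod =
      (∏ u : Fin t, (MvPolynomial.X (i, j u) : QR)) •
          ((List.ofFn fun u => cre (j u)).prod * ann i)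
        + ∑ u ∈ Finset.univ.filter (fun u : Fin t => j u = i),
            (∏ v ∈ Finset.univ.filter (fun v : Fin t => v < u),
                (MvPolynomial.X (i, j v) : QR)) •
              ((List.ofFn fun v => cre (j v)).eraseIdx u).prod := by
  have rel (u : Fin t) :
      ann i * cre (j u) = (MvPolynomial.X (i, j u) : QR) • (cre (j u) * ann i)
        + (if j u = i then 1 else 0 : QR) • 1 := by
    simp only [ann_mul_cre, eq_comm (a := i), ite_smul, one_smul, zero_smul]
  rw [mul_prod_ofFn_of_mul_eq_smul_add (ann i) (fun u => cre (j u)) _ _ rel, sum_filter]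
  congr 1
  refine sum_congr rfl fun u _ => ?_
  split_ifs <;> simp
end

section
/- Let (i_1,…,i_s) and (j_1,…,j_t) be finite sequences of positive integers which are NOT rearrangements of one another (i.e. the multisets {i_1,…,i_s} and {j_1,…,j_t} differ). Then in the multiparametric quon algebra A, the element a_{i_s}⋯a_{i_1} · a†_{j_1}⋯a†_{j_t} belongs to L + Rt, where L = Σ_{i ∈ ℕ⁺} A·a_i is the left ideal generated by all a_i and Rt = Σ_{j ∈ ℕ⁺} a_j†·A is the right ideal generated by all a_j†. (Equivalently, the vacuum expectation ⟨0| a_{i_s}⋯a_{i_1} a†_{j_1}⋯a†_{j_t} |0⟩ vanishes.) -/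
/-- The left ideal `L = Σ_i A·a_i`, as an `R`-submodule of `A`. -/
noncomputable def leftIdeal : Submodule QR QuonAlg :=
  Submodule.span QR {x : QuonAlg | ∃ y : QuonAlg, ∃ i : ℕ+, x = y * ann i}

/-- The right ideal `Rt = Σ_j a_j†·A`, as an `R`-submodule of `A`. -/
noncomputable def rightIdeal : Submodule QR QuonAlg :=
  Submodule.span QR {x : QuonAlg | ∃ y : QuonAlg, ∃ j : ℕ+, x = cre j * y}

/- auxiliary -/
noncomputable def creProd (js : List ℕ+) : QuonAlg := (js.map cre).prod

def Lgen : Set QuonAlg := {x : QuonAlg | ∃ y : QuonAlg, ∃ i : ℕ+, x = y * ann i}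

def Sgen (i : ℕ+) (js : List ℕ+) : Set QuonAlg :=
  {x | ∃ js' : List ℕ+, (i ::ₘ (↑js' : Multiset ℕ+)) = ↑js ∧ x = creProd js'}

def Tgen (is js : List ℕ+) : Set QuonAlg :=
  {x | ∃ js' : List ℕ+, ((↑is : Multiset ℕ+) + ↑js') = ↑js ∧ x = creProd js'}

lemma quon_rel (i j : ℕ+) :
    ann i * cre j = (MvPolynomial.X (i, j) : QR) • (cre j * ann i)
      + (if i = j then 1 else 0) := by
  have h := RingQuot.mkAlgHom_rel QR (QuonRel.rel i j)
  simp only [map_mul, map_add, map_smul, apply_ite (RingQuot.mkAlgHom QR QuonRel),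
    map_one, map_zero] at h
  simpa [ann, cre] using h

lemma span_mul_left (a : QuonAlg) {S : Set QuonAlg} {T : Submodule QR QuonAlg}
    (h : ∀ x ∈ S, a * x ∈ T) {x} (hx : x ∈ Submodule.span QR S) : a * x ∈ T := by
  have h2 : Submodule.map (LinearMap.mulLeft QR a) (Submodule.span QR S) ≤ T := by
    rw [Submodule.map_span, Submodule.span_le]
    rintro _ ⟨y, hy, rfl⟩
    exact h y hy
  exact h2 (Submodule.mem_map_of_mem hx)

lemma ann_mul_creProd (i : ℕ+) (js : List ℕ+) :
    ann i * creProd js ∈ Submodule.span QR (Lgen ∪ Sgen i js) := by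
  induction js with
  | nil =>
      have : ann i * creProd [] = 1 * ann i := by simp [creProd]
      rw [this]
      exact Submodule.subset_span (Or.inl ⟨1, i, rfl⟩)
  | cons j rest ih =>
      have hexp : ann i * creProd (j :: rest)
          = (MvPolynomial.X (i, j) : QR) • (cre j * (ann i * creProd rest))
            + (if i = j then creProd rest else 0) := by
        have : creProd (j :: rest) = cre j * creProd rest := by simp [creProd]
        rw [this, ← mul_assoc, quon_rel, add_mul, smul_mul_assoc, mul_assoc]
        congr 1
        by_cases hij : i = j <;> simp [hij]
      rw [hexp]
      refine Submodule.add_mem _ (Submodule.smul_mem _ _ ?_) ?_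
      · refine span_mul_left (cre j) ?_ ih
        rintro x (⟨y, i', rfl⟩ | ⟨js', hjs', rfl⟩)
        · exact Submodule.subset_span (Or.inl ⟨cre j * y, i', (mul_assoc _ _ _).symm⟩)
        · refine Submodule.subset_span (Or.inr ⟨j :: js', ?_, ?_⟩)
          · rw [← Multiset.cons_coe, ← Multiset.cons_coe, Multiset.cons_swap, hjs']
          · simp [creProd]
      · by_cases hij : i = j
        · subst hij
          simp only [if_pos rfl]
          exact Submodule.subset_span (Or.inr ⟨rest, rfl, rfl⟩)
        · simp [hij]

lemma annProd_mul_creProd (is js : List ℕ+) :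
    (is.map ann).reverse.prod * creProd js
      ∈ Submodule.span QR (Lgen ∪ Tgen is js) := by
  induction is generalizing js with
  | nil =>
      simp only [List.map_nil, List.reverse_nil, List.prod_nil, one_mul]
      exact Submodule.subset_span (Or.inr ⟨js, by simp, rfl⟩)
  | cons i is' ih =>
      have : ((i :: is').map ann).reverse.prod * creProd js
          = (is'.map ann).reverse.prod * (ann i * creProd js) := by
        simp [mul_assoc]
      rw [this]
      refine span_mul_left _ ?_ (ann_mul_creProd i js)
      rintro x (⟨y, i', rfl⟩ | ⟨js'', hjs'', rfl⟩)
      · exact Submodule.subset_span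
          (Or.inl ⟨(is'.map ann).reverse.prod * y, i', (mul_assoc _ _ _).symm⟩)
      · refine Submodule.span_mono ?_ (ih js'')
        apply Set.union_subset_union_right
        rintro _ ⟨js', hjs', rfl⟩
        refine ⟨js', ?_, rfl⟩
        simp only [← Multiset.cons_coe, Multiset.cons_add, hjs', hjs'']


/-- If the multisets `{i_1,…,i_s}` and `{j_1,…,j_t}` differ, then
`a_{i_s}⋯a_{i_1}·a†_{j_1}⋯a†_{j_t} ∈ L + Rt`, i.e. the vacuum expectation
`⟨0| a_{i_s}⋯a_{i_1} a†_{j_1}⋯a†_{j_t} |0⟩` vanishes. -/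
theorem braket_vanishes_of_multiset_ne (is js : List ℕ+)
    (h : (↑is : Multiset ℕ+) ≠ (↑js : Multiset ℕ+)) :
    (is.map ann).reverse.prod * (js.map cre).prod ∈ leftIdeal ⊔ rightIdeal := by
  have key := annProd_mul_creProd is js
  refine Submodule.span_le.mpr ?_ key
  rintro x (⟨y, i, rfl⟩ | ⟨js', hjs', rfl⟩)
  · exact le_sup_left (α := Submodule QR QuonAlg) (b := rightIdeal)
      (Submodule.subset_span ⟨y, i, rfl⟩)
  · cases js' with
    | nil =>
        exfalso
        apply h
        simpa using hjs'
    | cons j rest =>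
        refine le_sup_right (α := Submodule QR QuonAlg) (a := leftIdeal)
          (Submodule.subset_span ⟨creProd rest, j, ?_⟩)
        simp [creProd]
end
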